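/- Let N ⊆ M_d(ℂ) be a unital *-subalgebra, E : M_d(ℂ) → N the trace-preserving conditional expectation onto N, and σ, ρ positive definite states on M_d(ℂ). Define U : M_d(ℂ) → M_d(ℂ) by U(X) := σ^{1/2} σ_N^{−1/2} E(X). Then for every t > 0, tr[σ^{1/2} (Γ + tI)^{−1} σ^{1/2}] − tr[σ_N^{1/2} (Γ_N + tI)^{−1} σ_N^{1/2}] ≥ t ‖U((Γ_N + tI)^{−1} σ_N^{1/2}) − (Γ + tI)^{−1} σ^{1/2}‖₂², where (Γ + tI)^{−1} σ^{1/2} and (Γ_N + tI)^{−1} σ_N^{1/2} denote matrix products. -/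

import Mathlib

/-!
For Hermitian invertible `A` and any `Z`,
`Re tr(s* A⁻¹ s) = 2 Re tr(s* Z) - Re tr(Z* A Z) + Re tr((Z - A⁻¹ s)* A (Z - A⁻¹ s))`,
so `Re tr(s* A⁻¹ s)` is the maximum of the functional `Z ↦ 2 Re tr(s* Z) - Re tr(Z* A Z)`,
attained at `Z = A⁻¹ s`. Since `E` is trace preserving and `N`-modular, the map
`Y ↦ σ^{1/2} σ_N^{-1/2} Y` carries this functional for `(Γ_N + t, σ_N^{1/2})` on `N` to the
one for `(Γ + t, σ^{1/2})`. Evaluating at the maximiser `Y = (Γ_N + t)⁻¹ σ_N^{1/2}` of the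
reduced problem, the difference of the two traces is the gap `tr(W* (Γ + t) W) ≥ t ‖W‖₂²`.
-/

open Matrix MeasureTheory Filter Topology Kronecker ComplexOrder

/-- Apply a real function to a matrix via the functional calculus for Hermitian
matrices (and return `0` on non-Hermitian input). -/
noncomputable def mfun {d : ℕ} (f : ℝ → ℝ) (A : Matrix (Fin d) (Fin d) ℂ) :
    Matrix (Fin d) (Fin d) ℂ :=
  if hA : A.IsHermitian then hA.cfc f else 0

/-- Square root of a Hermitian positive semidefinite matrix. -/
noncomputable def msqrt {d : ℕ} (A : Matrix (Fin d) (Fin d) ℂ) : Matrix (Fin d) (Fin d) ℂ :=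
  mfun Real.sqrt A

/-- Inverse square root of a Hermitian positive semidefinite matrix (Moore–Penrose
pseudoinverse of the square root in the singular case, since `(0 : ℝ)⁻¹ = 0`). -/
noncomputable def misqrt {d : ℕ} (A : Matrix (Fin d) (Fin d) ℂ) : Matrix (Fin d) (Fin d) ℂ :=
  mfun (fun x => (Real.sqrt x)⁻¹) A

/-- Inverse of a Hermitian matrix (Moore–Penrose pseudoinverse in the singular case). -/
noncomputable def minv {d : ℕ} (A : Matrix (Fin d) (Fin d) ℂ) : Matrix (Fin d) (Fin d) ℂ :=
  mfun (fun x => x⁻¹) A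

/-- Logarithm of a positive definite matrix. -/
noncomputable def mlog {d : ℕ} (A : Matrix (Fin d) (Fin d) ℂ) : Matrix (Fin d) (Fin d) ℂ :=
  mfun Real.log A

/-- Frobenius (Schatten-2) norm ‖A‖₂ = tr(AᴴA)^(1/2). -/
noncomputable def frob {n : Type*} [Fintype n] (A : Matrix n n ℂ) : ℝ :=
  Real.sqrt (Matrix.trace (Aᴴ * A)).re

/-- Operator norm ‖A‖∞ of a matrix, acting on the Euclidean space ℂᵈ. -/
noncomputable def opNorm {n : Type*} [Fintype n] [DecidableEq n] (A : Matrix n n ℂ) : ℝ :=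
  ‖LinearMap.toContinuousLinearMap (Matrix.toEuclideanLin A)‖

/-- The Belavkin–Staszewski relative entropy
`Ŝ_BS(σ‖ρ) = −tr[σ log(σ^{−1/2} ρ σ^{−1/2})]`. -/
noncomputable def BS {d : ℕ} (σ ρ : Matrix (Fin d) (Fin d) ℂ) : ℝ :=
  -(Matrix.trace (σ * mlog (misqrt σ * ρ * misqrt σ))).re

/-- The maximal f-divergence `Ŝ_f(σ‖ρ) = tr[ρ^{1/2} f(ρ^{−1/2} σ ρ^{−1/2}) ρ^{1/2}]`. -/
noncomputable def hatS {d : ℕ} (f : ℝ → ℝ) (σ ρ : Matrix (Fin d) (Fin d) ℂ) : ℝ :=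
  (Matrix.trace (msqrt ρ * mfun f (misqrt ρ * σ * misqrt ρ) * msqrt ρ)).re

/-- The Umegaki relative entropy `D(σ‖ρ) = tr[σ (log σ − log ρ)]`. -/
noncomputable def relEnt {d : ℕ} (σ ρ : Matrix (Fin d) (Fin d) ℂ) : ℝ :=
  (Matrix.trace (σ * (mlog σ - mlog ρ))).re

/-- The Choi matrix of a linear map between matrix algebras. -/
noncomputable def choi {d₁ d₂ : ℕ} (T : Matrix (Fin d₁) (Fin d₁) ℂ →ₗ[ℂ] Matrix (Fin d₂) (Fin d₂) ℂ) :
    Matrix (Fin d₁ × Fin d₂) (Fin d₁ × Fin d₂) ℂ :=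
  Matrix.of fun p q => T (Matrix.single p.1 q.1 1) p.2 q.2

/-- A quantum channel: a completely positive (equivalently, with positive semidefinite Choi
matrix) trace-preserving linear map. -/
def IsCPTP {d₁ d₂ : ℕ} (T : Matrix (Fin d₁) (Fin d₁) ℂ →ₗ[ℂ] Matrix (Fin d₂) (Fin d₂) ℂ) :
    Prop :=
  (choi T).PosSemidef ∧ ∀ A, (T A).trace = A.trace

/-- Partial trace over the second tensor factor. -/
noncomputable def ptrace2 {d₂ s : ℕ} (M : Matrix (Fin d₂ × Fin s) (Fin d₂ × Fin s) ℂ) :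
    Matrix (Fin d₂) (Fin d₂) ℂ :=
  Matrix.of fun i j => ∑ k : Fin s, M (i, k) (j, k)

/-- The Loewner order: `A ≤ B` iff `B - A` is positive semidefinite. -/
def Loewner {n : ℕ} (A B : Matrix (Fin n) (Fin n) ℂ) : Prop := (B - A).PosSemidef

/-- A function `f : (0,∞) → ℝ` is operator convex. -/
def OperatorConvex (f : ℝ → ℝ) : Prop :=
  ∀ (n : ℕ) (A B : Matrix (Fin n) (Fin n) ℂ), A.PosDef → B.PosDef →
    ∀ t : ℝ, 0 ≤ t → t ≤ 1 →
      Loewner (mfun f ((t : ℂ) • A + ((1 - t : ℝ) : ℂ) • B))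
        ((t : ℂ) • mfun f A + ((1 - t : ℝ) : ℂ) • mfun f B)

/-- A function `f : (0,∞) → ℝ` is operator monotone decreasing. -/
def OperatorAntitone (f : ℝ → ℝ) : Prop :=
  ∀ (n : ℕ) (A B : Matrix (Fin n) (Fin n) ℂ), A.PosDef → B.PosDef →
    Loewner A B → Loewner (mfun f B) (mfun f A)

open scoped MatrixOrder

section FunctionalCalculus

variable {d : ℕ}

lemma mfun_eq_cfc (f : ℝ → ℝ) (A : Matrix (Fin d) (Fin d) ℂ) : mfun f A = cfc f A := by
  by_cases hA : A.IsHermitian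
  · rw [mfun, dif_pos hA, hA.cfc_eq]
  · rw [mfun, dif_neg hA]
    exact (cfc_apply_of_not_predicate A hA).symm

lemma isHermitian_mfun (f : ℝ → ℝ) (A : Matrix (Fin d) (Fin d) ℂ) :
    (mfun f A).IsHermitian := by
  rw [mfun_eq_cfc]
  exact cfc_predicate f A

lemma conjTranspose_msqrt (P : Matrix (Fin d) (Fin d) ℂ) : (msqrt P)ᴴ = msqrt P :=
  (isHermitian_mfun _ P).eq

lemma conjTranspose_misqrt (P : Matrix (Fin d) (Fin d) ℂ) : (misqrt P)ᴴ = misqrt P :=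
  (isHermitian_mfun _ P).eq

lemma mfun_mul_mfun (f g : ℝ → ℝ) (A : Matrix (Fin d) (Fin d) ℂ) :
    mfun f A * mfun g A = mfun (fun x => f x * g x) A := by
  simp only [mfun_eq_cfc]
  exact (cfc_mul f g A (A.finite_real_spectrum.continuousOn _)
    (A.finite_real_spectrum.continuousOn _)).symm

lemma mfun_mem {N : Subalgebra ℂ (Matrix (Fin d) (Fin d) ℂ)} (hNstar : ∀ A ∈ N, Aᴴ ∈ N)
    (f : ℝ → ℝ) {A : Matrix (Fin d) (Fin d) ℂ} (hA : A ∈ N) : mfun f A ∈ N := by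
  let S : StarSubalgebra ℂ (Matrix (Fin d) (Fin d) ℂ) := { N with star_mem' := hNstar _ }
  have : IsClosed (S : Set (Matrix (Fin d) (Fin d) ℂ)) :=
    Submodule.closed_of_finiteDimensional (Subalgebra.toSubmodule N)
  rw [mfun_eq_cfc]
  exact cfc_mem (𝕜' := ℂ) (s := S) f hA

lemma Matrix.PosDef.inv_mem {N : Subalgebra ℂ (Matrix (Fin d) (Fin d) ℂ)}
    (hNstar : ∀ A ∈ N, Aᴴ ∈ N) {A : Matrix (Fin d) (Fin d) ℂ} (hA : A.PosDef) (hAN : A ∈ N) :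
    A⁻¹ ∈ N := by
  rw [nonsing_inv_eq_ringInverse,
    ← cfc_ringInverse_id (R := ℝ) A hA.isUnit hA.isHermitian.isSelfAdjoint, ← mfun_eq_cfc]
  exact mfun_mem hNstar _ hAN

variable {P : Matrix (Fin d) (Fin d) ℂ}

lemma mfun_mul_mfun_eq_one (hP : P.PosDef) {f g : ℝ → ℝ}
    (h : ∀ x, 0 < x → f x * g x = 1) : mfun f P * mfun g P = 1 := by
  rw [mfun_mul_mfun, mfun_eq_cfc,
    cfc_congr fun x hx => h x (hP.isStrictlyPositive.spectrum_pos hx), cfc_const_one ℝ P]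

lemma msqrt_mul_msqrt (hP : P.PosDef) : msqrt P * msqrt P = P := by
  rw [msqrt, mfun_mul_mfun, mfun_eq_cfc]
  conv_rhs => rw [← cfc_id' ℝ P]
  exact cfc_congr fun x hx => Real.mul_self_sqrt (hP.isStrictlyPositive.spectrum_pos hx).le

lemma msqrt_mul_misqrt (hP : P.PosDef) : msqrt P * misqrt P = 1 :=
  mfun_mul_mfun_eq_one hP fun _ hx => mul_inv_cancel₀ (Real.sqrt_pos.mpr hx).ne'

lemma misqrt_mul_msqrt (hP : P.PosDef) : misqrt P * msqrt P = 1 :=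
  mfun_mul_mfun_eq_one hP fun _ hx => inv_mul_cancel₀ (Real.sqrt_pos.mpr hx).ne'

lemma mul_misqrt (hP : P.PosDef) : P * misqrt P = msqrt P := by
  nth_rw 1 [← msqrt_mul_msqrt hP]
  rw [mul_assoc, msqrt_mul_misqrt hP, mul_one]

lemma misqrt_mul_add_smul_mul_misqrt (hP : P.PosDef) (X : Matrix (Fin d) (Fin d) ℂ)
    (c : ℂ) : misqrt P * (X + c • P) * misqrt P = misqrt P * X * misqrt P + c • 1 := by
  rw [mul_add, add_mul, mul_smul_comm, smul_mul_assoc, mul_assoc (misqrt P) P, mul_misqrt hP,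
    misqrt_mul_msqrt hP]

lemma Matrix.PosSemidef.misqrt_conj {X : Matrix (Fin d) (Fin d) ℂ} (hX : X.PosSemidef)
    (P : Matrix (Fin d) (Fin d) ℂ) : (misqrt P * X * misqrt P).PosSemidef := by
  simpa only [conjTranspose_misqrt] using hX.conjTranspose_mul_mul_same (misqrt P)

end FunctionalCalculus

section Positivity

variable {n : Type*} [DecidableEq n]

lemma Matrix.PosSemidef.add_smul_one_posDef {Γ : Matrix n n ℂ} (hΓ : Γ.PosSemidef) {t : ℝ}
    (ht : 0 < t) : (Γ + (t : ℂ) • 1).PosDef :=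
  PosDef.posSemidef_add hΓ (PosDef.one.smul (by exact_mod_cast ht))

lemma Matrix.PosDef.map_of_unital [Fintype n] {m : Type*} [DecidableEq m]
    {E : Matrix n n ℂ →ₗ[ℂ] Matrix m m ℂ}
    (hEpos : ∀ A : Matrix n n ℂ, A.PosSemidef → (E A).PosSemidef) (hE1 : E 1 = 1)
    {A : Matrix n n ℂ} (hA : A.PosDef) : (E A).PosDef := by
  rcases subsingleton_or_nontrivial (Matrix n n ℂ) with _ | _
  · rw [Subsingleton.elim A 1, hE1]
    exact PosDef.one
  obtain ⟨r, hr, hrA⟩ := (CFC.exists_pos_algebraMap_le_iff hA.isHermitian.isSelfAdjoint).2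
    fun x hx => hA.isStrictlyPositive.spectrum_pos hx
  have hsplit : E A = E (A - algebraMap ℝ _ r) + r • 1 := by
    rw [map_sub, Algebra.algebraMap_eq_smul_one, LinearMap.map_smul_of_tower, hE1, sub_add_cancel]
  rw [hsplit]
  exact PosDef.posSemidef_add (hEpos _ (le_iff.mp hrA)) (PosDef.one.smul hr)

end Positivity

section Variational

variable {n : Type*} [Fintype n]

def varFunctional (A s Z : Matrix n n ℂ) : ℝ :=
  2 * (sᴴ * Z).trace.re - (Zᴴ * A * Z).trace.re

lemma re_trace_conjTranspose_mul (s Z : Matrix n n ℂ) :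
    (Zᴴ * s).trace.re = (sᴴ * Z).trace.re := by
  rw [← conjTranspose_conjTranspose s, ← conjTranspose_mul, trace_conjTranspose,
    conjTranspose_conjTranspose, Complex.star_def, Complex.conj_re]

lemma frob_sq (W : Matrix n n ℂ) : frob W ^ 2 = (Wᴴ * W).trace.re :=
  Real.sq_sqrt (RCLike.nonneg_iff.mp (posSemidef_conjTranspose_mul_self W).trace_nonneg).1

lemma mul_frob_sq_le_re_trace [DecidableEq n] {Γ : Matrix n n ℂ} (hΓ : Γ.PosSemidef) (t : ℝ)
    (W : Matrix n n ℂ) : t * frob W ^ 2 ≤ (Wᴴ * (Γ + (t : ℂ) • 1) * W).trace.re := by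
  have hΓW : 0 ≤ (Wᴴ * Γ * W).trace.re :=
    (RCLike.nonneg_iff.mp (hΓ.conjTranspose_mul_mul_same W).trace_nonneg).1
  rw [frob_sq, mul_add, add_mul, trace_add, Complex.add_re, mul_smul_comm, mul_one, smul_mul,
    trace_smul, smul_eq_mul, Complex.re_ofReal_mul]
  linarith

variable [DecidableEq n] {A : Matrix n n ℂ}

lemma re_trace_inv_eq_varFunctional_add (hA : A.IsHermitian) (hAu : IsUnit A.det)
    (s Z : Matrix n n ℂ) :
    (sᴴ * A⁻¹ * s).trace.re =
      varFunctional A s Z + ((Z - A⁻¹ * s)ᴴ * A * (Z - A⁻¹ * s)).trace.re := by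
  have hexp : (Z - A⁻¹ * s)ᴴ * A * (Z - A⁻¹ * s) =
      Zᴴ * A * Z - Zᴴ * s - sᴴ * Z + sᴴ * A⁻¹ * s := by
    rw [conjTranspose_sub, conjTranspose_mul, hA.inv.eq]
    simp only [sub_mul, mul_sub, mul_assoc, mul_nonsing_inv_cancel_left _ _ hAu,
      nonsing_inv_mul_cancel_left _ _ hAu]
    abel
  rw [varFunctional, hexp, trace_add, trace_sub, trace_sub, Complex.add_re, Complex.sub_re,
    Complex.sub_re, re_trace_conjTranspose_mul]
  ring

lemma varFunctional_inv_mul (hA : A.IsHermitian) (hAu : IsUnit A.det) (s : Matrix n n ℂ) :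
    varFunctional A s (A⁻¹ * s) = (sᴴ * A⁻¹ * s).trace.re := by
  simp [re_trace_inv_eq_varFunctional_add hA hAu s (A⁻¹ * s)]

end Variational

section ConditionalExpectation

variable {d : ℕ} {N : Subalgebra ℂ (Matrix (Fin d) (Fin d) ℂ)}
  {E : Matrix (Fin d) (Fin d) ℂ →ₗ[ℂ] Matrix (Fin d) (Fin d) ℂ}

lemma trace_mul_eq_trace_map_mul
    (hEmod : ∀ (A : Matrix (Fin d) (Fin d) ℂ), ∀ B ∈ N, E (A * B) = E A * B)
    (hEtr : ∀ A : Matrix (Fin d) (Fin d) ℂ, (E A).trace = A.trace)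
    (K : Matrix (Fin d) (Fin d) ℂ) {B : Matrix (Fin d) (Fin d) ℂ} (hB : B ∈ N) :
    (K * B).trace = (E K * B).trace := by
  rw [← hEtr, hEmod K B hB]

lemma trace_conj_eq_trace_conj_map (hNstar : ∀ A ∈ N, Aᴴ ∈ N)
    (hEmod : ∀ (A : Matrix (Fin d) (Fin d) ℂ), ∀ B ∈ N, E (A * B) = E A * B)
    (hEtr : ∀ A : Matrix (Fin d) (Fin d) ℂ, (E A).trace = A.trace)
    (K : Matrix (Fin d) (Fin d) ℂ) {V : Matrix (Fin d) (Fin d) ℂ} (hV : V ∈ N) :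
    (Vᴴ * K * V).trace = (Vᴴ * E K * V).trace :=
  calc (Vᴴ * K * V).trace = (K * (V * Vᴴ)).trace := by
        rw [trace_mul_cycle, trace_mul_comm]
    _ = (E K * (V * Vᴴ)).trace :=
        trace_mul_eq_trace_map_mul hEmod hEtr K (mul_mem hV (hNstar V hV))
    _ = (Vᴴ * E K * V).trace := by rw [trace_mul_cycle, trace_mul_comm]

lemma varFunctional_transfer (hNstar : ∀ A ∈ N, Aᴴ ∈ N)
    (hEmod : ∀ (A : Matrix (Fin d) (Fin d) ℂ), ∀ B ∈ N, E (A * B) = E A * B)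
    (hEtr : ∀ A : Matrix (Fin d) (Fin d) ℂ, (E A).trace = A.trace)
    {σ : Matrix (Fin d) (Fin d) ℂ} (hσ : σ.PosDef) (hEσ : (E σ).PosDef) (hEσN : E σ ∈ N)
    (K : Matrix (Fin d) (Fin d) ℂ) {Y : Matrix (Fin d) (Fin d) ℂ} (hY : Y ∈ N) :
    varFunctional (misqrt σ * K * misqrt σ) (msqrt σ) (msqrt σ * misqrt (E σ) * Y) =
      varFunctional (misqrt (E σ) * E K * misqrt (E σ)) (msqrt (E σ)) Y := by
  have hV : misqrt (E σ) * Y ∈ N := mul_mem (mfun_mem hNstar _ hEσN) hY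
  have hlin : (msqrt σ)ᴴ * (msqrt σ * misqrt (E σ) * Y) = σ * (misqrt (E σ) * Y) := by
    rw [conjTranspose_msqrt, ← mul_assoc, ← mul_assoc, msqrt_mul_msqrt hσ, mul_assoc]
  have hquad : (msqrt σ * misqrt (E σ) * Y)ᴴ * (misqrt σ * K * misqrt σ) *
      (msqrt σ * misqrt (E σ) * Y) = (misqrt (E σ) * Y)ᴴ * K * (misqrt (E σ) * Y) := by
    have hsi : ∀ X, msqrt σ * (misqrt σ * X) = X := fun X => by
      rw [← mul_assoc, msqrt_mul_misqrt hσ, one_mul]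
    have his : ∀ X, misqrt σ * (msqrt σ * X) = X := fun X => by
      rw [← mul_assoc, misqrt_mul_msqrt hσ, one_mul]
    simp only [conjTranspose_mul, conjTranspose_msqrt, mul_assoc, hsi, his]
  rw [varFunctional, varFunctional, hlin, hquad, trace_mul_eq_trace_map_mul hEmod hEtr σ hV,
    ← mul_assoc, mul_misqrt hEσ, conjTranspose_msqrt,
    trace_conj_eq_trace_conj_map hNstar hEmod hEtr K hV]
  simp only [conjTranspose_mul, conjTranspose_misqrt, mul_assoc]

end ConditionalExpectation

theorem stmt8_general {d : ℕ}
    (N : Subalgebra ℂ (Matrix (Fin d) (Fin d) ℂ))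
    (hNstar : ∀ A ∈ N, Aᴴ ∈ N)
    (E : Matrix (Fin d) (Fin d) ℂ →ₗ[ℂ] Matrix (Fin d) (Fin d) ℂ)
    (hEpos : ∀ A : Matrix (Fin d) (Fin d) ℂ, A.PosSemidef → (E A).PosSemidef)
    (hEmem : ∀ A : Matrix (Fin d) (Fin d) ℂ, E A ∈ N)
    (hEfix : ∀ B ∈ N, E B = B)
    (hEmod : ∀ (A : Matrix (Fin d) (Fin d) ℂ), ∀ B ∈ N, E (A * B) = E A * B)
    (hEtr : ∀ A : Matrix (Fin d) (Fin d) ℂ, (E A).trace = A.trace)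
    (σ ρ : Matrix (Fin d) (Fin d) ℂ)
    (hσ : σ.PosDef)
    (hρ : ρ.PosDef) :
    ∀ t : ℝ, 0 < t →
      (Matrix.trace (msqrt σ * (misqrt σ * ρ * misqrt σ + (t : ℂ) • 1)⁻¹ * msqrt σ)).re -
          (Matrix.trace (msqrt (E σ) *
            (misqrt (E σ) * E ρ * misqrt (E σ) + (t : ℂ) • 1)⁻¹ * msqrt (E σ))).re ≥
        t * frob (msqrt σ * misqrt (E σ) *
            E ((misqrt (E σ) * E ρ * misqrt (E σ) + (t : ℂ) • 1)⁻¹ * msqrt (E σ)) -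
          (misqrt σ * ρ * misqrt σ + (t : ℂ) • 1)⁻¹ * msqrt σ) ^ 2 := by
  intro t ht
  have hEσ : (E σ).PosDef := hσ.map_of_unital hEpos (hEfix 1 N.one_mem)
  have hΓ := hρ.posSemidef.misqrt_conj σ
  have hA := hΓ.add_smul_one_posDef ht
  have hAN := ((hEpos ρ hρ.posSemidef).misqrt_conj (E σ)).add_smul_one_posDef ht
  have hsiN : misqrt (E σ) ∈ N := mfun_mem hNstar _ (hEmem σ)
  set Y := (misqrt (E σ) * E ρ * misqrt (E σ) + (t : ℂ) • 1)⁻¹ * msqrt (E σ)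
  have hY : Y ∈ N :=
    mul_mem (hAN.inv_mem hNstar (add_mem (mul_mem (mul_mem hsiN (hEmem ρ)) hsiN)
      (N.smul_mem N.one_mem _))) (mfun_mem hNstar _ (hEmem σ))
  have htransfer := varFunctional_transfer hNstar hEmod hEtr hσ hEσ (hEmem σ) (ρ + (t : ℂ) • σ) hY
  rw [map_add, map_smul, misqrt_mul_add_smul_mul_misqrt hσ,
    misqrt_mul_add_smul_mul_misqrt hEσ] at htransfer
  have hgap := re_trace_inv_eq_varFunctional_add hA.isHermitian hA.det_pos.ne'.isUnit (msqrt σ)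
    (msqrt σ * misqrt (E σ) * Y)
  have hopt := varFunctional_inv_mul hAN.isHermitian hAN.det_pos.ne'.isUnit (msqrt (E σ))
  rw [conjTranspose_msqrt] at hgap hopt
  rw [hEfix Y hY, ge_iff_le, hgap, ← hopt, htransfer, add_sub_cancel_left]
  exact mul_frob_sq_le_re_trace hΓ t _

theorem stmt8 {d : ℕ}
    (N : Subalgebra ℂ (Matrix (Fin d) (Fin d) ℂ))
    (hNstar : ∀ A ∈ N, Aᴴ ∈ N)
    (E : Matrix (Fin d) (Fin d) ℂ →ₗ[ℂ] Matrix (Fin d) (Fin d) ℂ)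
    (hEpos : ∀ A : Matrix (Fin d) (Fin d) ℂ, A.PosSemidef → (E A).PosSemidef)
    (hEmem : ∀ A : Matrix (Fin d) (Fin d) ℂ, E A ∈ N)
    (hEfix : ∀ B ∈ N, E B = B)
    (hEmod : ∀ (A : Matrix (Fin d) (Fin d) ℂ), ∀ B ∈ N, E (A * B) = E A * B)
    (hEtr : ∀ A : Matrix (Fin d) (Fin d) ℂ, (E A).trace = A.trace)
    (σ ρ : Matrix (Fin d) (Fin d) ℂ)
    (hσ : σ.PosDef) (hσtr : σ.trace = 1)
    (hρ : ρ.PosDef) (hρtr : ρ.trace = 1) :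
    ∀ t : ℝ, 0 < t →
      (Matrix.trace (msqrt σ * (misqrt σ * ρ * misqrt σ + (t : ℂ) • 1)⁻¹ * msqrt σ)).re -
          (Matrix.trace (msqrt (E σ) *
            (misqrt (E σ) * E ρ * misqrt (E σ) + (t : ℂ) • 1)⁻¹ * msqrt (E σ))).re ≥
        t * frob (msqrt σ * misqrt (E σ) *
            E ((misqrt (E σ) * E ρ * misqrt (E σ) + (t : ℂ) • 1)⁻¹ * msqrt (E σ)) -
          (misqrt σ * ρ * misqrt σ + (t : ℂ) • 1)⁻¹ * msqrt σ) ^ 2 :=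
  stmt8_general N hNstar E hEpos hEmem hEfix hEmod hEtr σ ρ hσ hρ
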